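/- arXiv:2303.17834 — 9 statements merged into one kernel-verified Lean document; each statement's English description precedes it below -/
import Mathlib

section
/- For every real number λ with 0 ≤ λ ≤ 1/2, the Martello–Toth function f_0^λ : [0,1] → [0,1], defined by f_0^λ(x) = 1 if x > 1−λ, f_0^λ(x) = x if λ ≤ x ≤ 1−λ, and f_0^λ(x) = 0 if x < λ, is a dual-feasible function; that is, for every finite family (x_i)_{i∈S} of real numbers with 0 ≤ x_i ≤ 1 for all i ∈ S and Σ_{i∈S} x_i ≤ 1, one has Σ_{i∈S} f_0^λ(x_i) ≤ 1. -/
/-- The Martello–Toth function `f₀^λ` is a dual-feasible function for `0 ≤ λ ≤ 1/2`. -/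
theorem martello_toth_dff (lam : ℝ) (hlam0 : 0 ≤ lam) (hlam1 : lam ≤ 1 / 2)
    {ι : Type*} (S : Finset ι) (x : ι → ℝ)
    (hx0 : ∀ i ∈ S, 0 ≤ x i) (hx1 : ∀ i ∈ S, x i ≤ 1)
    (hsum : ∑ i ∈ S, x i ≤ 1) :
    ∑ i ∈ S, (if 1 - lam < x i then (1 : ℝ)
      else if lam ≤ x i then x i else 0) ≤ 1 := by
  classical
  have hlam' : lam ≤ 1 - lam := by linarith
  by_cases hB : ∀ i ∈ S, x i ≤ 1 - lam
  · calc ∑ i ∈ S, (if 1 - lam < x i then (1 : ℝ)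
        else if lam ≤ x i then x i else 0) ≤ ∑ i ∈ S, x i := by
          apply Finset.sum_le_sum
          intro i hi
          rw [if_neg (not_lt.mpr (hB i hi))]
          split_ifs
          · exact le_rfl
          · exact hx0 i hi
      _ ≤ 1 := hsum
  · push_neg at hB
    obtain ⟨j, hjS, hj⟩ := hB
    have key : ∀ i ∈ S.erase j, x i < lam := by
      intro i hi
      obtain ⟨hne, hiS⟩ := Finset.mem_erase.mp hi
      have hsub : ({i, j} : Finset ι) ⊆ S := by
        intro a ha
        rcases Finset.mem_insert.mp ha with h | h
        · exact h ▸ hiS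
        · exact (Finset.mem_singleton.mp h) ▸ hjS
      have hle : x i + x j ≤ ∑ i ∈ S, x i := by
        rw [← Finset.sum_pair hne]
        exact Finset.sum_le_sum_of_subset_of_nonneg hsub (fun a ha _ => hx0 a ha)
      linarith
    rw [← Finset.add_sum_erase _ _ hjS, if_pos hj]
    have hz : ∑ i ∈ S.erase j, (if 1 - lam < x i then (1 : ℝ)
        else if lam ≤ x i then x i else 0) = 0 := by
      apply Finset.sum_eq_zero
      intro i hi
      have := key i hi
      rw [if_neg (by linarith), if_neg (by linarith)]
    rw [hz]; norm_num
end

section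
/- Fix a real number d̄ > 0 and an integer q with 1 ≤ q ≤ d̄/2. Let K be a finite set of routes, where each route k ∈ K has a duration t_k ≥ 0 and a deadline d̄_k, let P be a finite set of pickers, and let ρ : K × P → {0,1} satisfy, for every picker p ∈ P, Σ_{k ∈ K(d̄)} t_k ρ_{kp} ≤ d̄, where K(d̄) = {k ∈ K : d̄_k ≤ d̄}. Define K_1(d̄,q) = {k ∈ K(d̄) : t_k > d̄ − q} and K_2(d̄,q) = {k ∈ K(d̄) : q ≤ t_k ≤ d̄ − q}. Then the Martello and Toth cut holds: Σ_{k ∈ K_1(d̄,q)} d̄ · (Σ_{p∈P} ρ_{kp}) + Σ_{k ∈ K_2(d̄,q)} t_k · (Σ_{p∈P} ρ_{kp}) ≤ d̄ · |P|. -/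
/-- The Martello and Toth cut is valid for any assignment satisfying the per-picker
deadline constraints. -/
theorem martello_toth_cut {κ π : Type*} (K : Finset κ) (P : Finset π)
    (t d : κ → ℝ) (ht : ∀ k ∈ K, 0 ≤ t k)
    (dbar : ℝ) (hdbar : 0 < dbar) (q : ℤ) (hq1 : 1 ≤ q) (hq2 : (q : ℝ) ≤ dbar / 2)
    (ρ : κ → π → ℝ) (hbin : ∀ k ∈ K, ∀ p ∈ P, ρ k p = 0 ∨ ρ k p = 1)
    (hdl : ∀ p ∈ P, ∑ k ∈ K.filter (fun k => d k ≤ dbar), t k * ρ k p ≤ dbar) :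
    ∑ k ∈ K.filter (fun k => d k ≤ dbar ∧ dbar - q < t k), dbar * (∑ p ∈ P, ρ k p)
      + ∑ k ∈ K.filter (fun k => d k ≤ dbar ∧ (q : ℝ) ≤ t k ∧ t k ≤ dbar - q),
          t k * (∑ p ∈ P, ρ k p)
      ≤ dbar * P.card := by
  classical
  set S := K.filter (fun k => d k ≤ dbar) with hS
  set K1 := K.filter (fun k => d k ≤ dbar ∧ dbar - q < t k) with hK1
  set K2 := K.filter (fun k => d k ≤ dbar ∧ (q : ℝ) ≤ t k ∧ t k ≤ dbar - q) with hK2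
  have hq0 : (1 : ℝ) ≤ (q : ℝ) := by exact_mod_cast hq1
  have hK1S : K1 ⊆ S := by
    intro k hk
    simp only [hK1, hS, Finset.mem_filter] at hk ⊢
    exact ⟨hk.1, hk.2.1⟩
  have hK2S : K2 ⊆ S := by
    intro k hk
    simp only [hK2, hS, Finset.mem_filter] at hk ⊢
    exact ⟨hk.1, hk.2.1⟩
  have hSK : S ⊆ K := Finset.filter_subset _ _
  have hρnn : ∀ k ∈ K, ∀ p ∈ P, 0 ≤ ρ k p := by
    intro k hk p hp
    rcases hbin k hk p hp with h | h <;> rw [h] <;> norm_num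
  have key : ∀ p ∈ P,
      ∑ k ∈ K1, dbar * ρ k p + ∑ k ∈ K2, t k * ρ k p ≤ dbar := by
    intro p hp
    by_cases hA : ∃ k ∈ K1, ρ k p = 1
    · obtain ⟨k0, hk0, hρ0⟩ := hA
      have hk0S : k0 ∈ S := hK1S hk0
      have hk0t : dbar - q < t k0 := by
        simp only [hK1, Finset.mem_filter] at hk0; exact hk0.2.2
      -- pair bound
      have pair : ∀ k ∈ S, k ≠ k0 → ρ k p = 1 → t k0 + t k ≤ dbar := by
        intro k hkS hne hρk
        have hsub : ({k0, k} : Finset κ) ⊆ S := by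
          intro x hx
          simp only [Finset.mem_insert, Finset.mem_singleton] at hx
          rcases hx with rfl | rfl <;> assumption
        have hle : ∑ x ∈ ({k0, k} : Finset κ), t x * ρ x p
            ≤ ∑ x ∈ S, t x * ρ x p := by
          apply Finset.sum_le_sum_of_subset_of_nonneg hsub
          intro x hx _
          exact mul_nonneg (ht x (hSK hx)) (hρnn x (hSK hx) p hp)
        rw [Finset.sum_pair (Ne.symm hne), hρ0, hρk, mul_one, mul_one] at hle
        exact hle.trans (hdl p hp)
      have hK1z : ∀ k ∈ K1, k ≠ k0 → ρ k p = 0 := by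
        intro k hk hne
        rcases hbin k (hSK (hK1S hk)) p hp with h | h
        · exact h
        · exfalso
          have hkt : dbar - q < t k := by
            simp only [hK1, Finset.mem_filter] at hk; exact hk.2.2
          have := pair k (hK1S hk) hne h
          linarith
      have hK2z : ∀ k ∈ K2, ρ k p = 0 := by
        intro k hk
        have hkt : (q : ℝ) ≤ t k ∧ t k ≤ dbar - q := by
          simp only [hK2, Finset.mem_filter] at hk; exact hk.2.2
        have hne : k ≠ k0 := by
          rintro rfl; linarith [hkt.2]
        rcases hbin k (hSK (hK2S hk)) p hp with h | h
        · exact h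
        · exfalso
          have := pair k (hK2S hk) hne h
          linarith [hkt.1]
      have h1 : ∑ k ∈ K1, dbar * ρ k p = dbar := by
        rw [Finset.sum_eq_single_of_mem k0 hk0
          (fun k hk hne => by rw [hK1z k hk hne, mul_zero]), hρ0, mul_one]
      have h2 : ∑ k ∈ K2, t k * ρ k p = 0 := by
        apply Finset.sum_eq_zero
        intro k hk; rw [hK2z k hk, mul_zero]
      rw [h1, h2, add_zero]
    · push_neg at hA
      have h1 : ∑ k ∈ K1, dbar * ρ k p = 0 := by
        apply Finset.sum_eq_zero
        intro k hk
        rcases hbin k (hSK (hK1S hk)) p hp with h | h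
        · rw [h, mul_zero]
        · exact absurd h (hA k hk)
      rw [h1, zero_add]
      have h2 : ∑ k ∈ K2, t k * ρ k p ≤ ∑ k ∈ S, t k * ρ k p := by
        apply Finset.sum_le_sum_of_subset_of_nonneg hK2S
        intro x hx _
        exact mul_nonneg (ht x (hSK hx)) (hρnn x (hSK hx) p hp)
      exact h2.trans (hdl p hp)
  calc ∑ k ∈ K1, dbar * (∑ p ∈ P, ρ k p) + ∑ k ∈ K2, t k * (∑ p ∈ P, ρ k p)
      = ∑ p ∈ P, (∑ k ∈ K1, dbar * ρ k p + ∑ k ∈ K2, t k * ρ k p) := by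
        simp_rw [Finset.mul_sum]
        rw [Finset.sum_add_distrib, Finset.sum_comm (s := K1), Finset.sum_comm (s := K2)]
    _ ≤ ∑ p ∈ P, dbar := Finset.sum_le_sum key
    _ = dbar * P.card := by rw [Finset.sum_const, nsmul_eq_mul, mul_comm]
end

section
/- For every positive integer λ, the function g^λ defined on [0,1] by g^λ(0) = 0, g^λ(x) = ((λ+1)x − 1)/λ if (λ+1)x is a nonzero integer, and g^λ(x) = ⌊(λ+1)x⌋/λ otherwise, is a dual-feasible function; that is, for every finite family (x_i)_{i∈S} of real numbers with 0 ≤ x_i ≤ 1 for all i ∈ S and Σ_{i∈S} x_i ≤ 1, one has Σ_{i∈S} g^λ(x_i) ≤ 1. -/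
open scoped Classical

/-- The function `g^λ` (a weakening of the Fekete–Schepers function) is a dual-feasible
function, for every positive integer `λ`. -/
theorem g_lambda_dff (lam : ℕ) (hlam : 0 < lam)
    {ι : Type*} (S : Finset ι) (x : ι → ℝ)
    (hx0 : ∀ i ∈ S, 0 ≤ x i) (hx1 : ∀ i ∈ S, x i ≤ 1)
    (hsum : ∑ i ∈ S, x i ≤ 1) :
    ∑ i ∈ S, (if x i = 0 then (0 : ℝ)
      else if ∃ m : ℤ, m ≠ 0 ∧ ((lam : ℝ) + 1) * x i = m then
        (((lam : ℝ) + 1) * x i - 1) / lam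
      else (⌊((lam : ℝ) + 1) * x i⌋ : ℝ) / lam) ≤ 1 := by
  have hl : (0:ℝ) < (lam:ℝ) := by exact_mod_cast hlam
  set y : ι → ℝ := fun i => ((lam:ℝ)+1) * x i with hy
  set h : ι → ℝ := fun i =>
    if x i = 0 then 0
    else if ∃ m : ℤ, m ≠ 0 ∧ y i = m then y i - 1
    else (⌊y i⌋ : ℝ) with hh
  have hy0 : ∀ i ∈ S, 0 ≤ y i := fun i hi => mul_nonneg (by positivity) (hx0 i hi)
  have hsumy : ∑ i ∈ S, y i ≤ (lam:ℝ) + 1 := by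
    have : ∑ i ∈ S, y i = ((lam:ℝ)+1) * ∑ i ∈ S, x i := by
      rw [Finset.mul_sum]
    rw [this]
    calc ((lam:ℝ)+1) * ∑ i ∈ S, x i ≤ ((lam:ℝ)+1) * 1 :=
          mul_le_mul_of_nonneg_left hsum (by positivity)
      _ = (lam:ℝ)+1 := by ring
  have hhy : ∀ i ∈ S, h i ≤ y i := by
    intro i hi
    simp only [hh]
    split_ifs with h1 h2
    · exact hy0 i hi
    · linarith
    · exact Int.floor_le _
  have key : ∑ i ∈ S, h i ≤ (lam:ℝ) := by
    by_cases hex : ∃ i0 ∈ S, x i0 ≠ 0 ∧ ∃ m : ℤ, m ≠ 0 ∧ y i0 = m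
    · obtain ⟨i0, hi0, hxi0, hPi0⟩ := hex
      have h1 : h i0 ≤ y i0 - 1 := by
        simp only [hh]; rw [if_neg hxi0, if_pos hPi0]
      calc ∑ i ∈ S, h i = h i0 + ∑ i ∈ S.erase i0, h i :=
              (Finset.add_sum_erase S h hi0).symm
        _ ≤ (y i0 - 1) + ∑ i ∈ S.erase i0, y i := by
            apply add_le_add h1
            exact Finset.sum_le_sum (fun i hi => hhy i (Finset.mem_of_mem_erase hi))
        _ = (∑ i ∈ S, y i) - 1 := by
            rw [← Finset.add_sum_erase S y hi0]; ring
        _ ≤ (lam:ℝ) := by linarith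
    · have hex' : ∀ i ∈ S, x i ≠ 0 → ¬ ∃ m : ℤ, m ≠ 0 ∧ y i = m :=
        fun i hi hx hP => hex ⟨i, hi, hx, hP⟩
      have hfl : ∀ i ∈ S, h i = (⌊y i⌋ : ℝ) := by
        intro i hi
        simp only [hh]
        by_cases hx : x i = 0
        · rw [if_pos hx]
          have hyi : y i = 0 := by simp [hy, hx]
          rw [hyi]; simp
        · rw [if_neg hx, if_neg (hex' i hi hx)]
      rw [Finset.sum_congr rfl hfl]
      by_cases hne : ∃ i0 ∈ S, x i0 ≠ 0
      · obtain ⟨i0, hi0, hxi0⟩ := hne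
        have hxpos : 0 < x i0 := lt_of_le_of_ne (hx0 i0 hi0) (Ne.symm hxi0)
        have hypos : 0 < y i0 := mul_pos (by positivity) hxpos
        have h1 : (⌊y i0⌋ : ℝ) < y i0 := by
          rcases lt_or_eq_of_le (Int.floor_le (y i0)) with hlt | heq
          · exact hlt
          · exfalso
            apply hex' i0 hi0 hxi0
            refine ⟨⌊y i0⌋, fun hm => ?_, heq.symm⟩
            rw [hm] at heq
            simp at heq
            linarith
        have hstrict : ∑ i ∈ S, (⌊y i⌋ : ℝ) < (lam:ℝ) + 1 := by
          calc ∑ i ∈ S, (⌊y i⌋:ℝ) = (⌊y i0⌋:ℝ) + ∑ i ∈ S.erase i0, (⌊y i⌋:ℝ) :=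
                (Finset.add_sum_erase S _ hi0).symm
            _ < y i0 + ∑ i ∈ S.erase i0, y i := by
                apply add_lt_add_of_lt_of_le h1
                exact Finset.sum_le_sum
                  (fun i hi => Int.floor_le (y i))
            _ = ∑ i ∈ S, y i := Finset.add_sum_erase S y hi0
            _ ≤ (lam:ℝ)+1 := hsumy
        have hint : (∑ i ∈ S, ⌊y i⌋ : ℤ) < (lam:ℤ) + 1 := by
          have : ((∑ i ∈ S, ⌊y i⌋ : ℤ) : ℝ) < ((lam:ℤ):ℝ) + 1 := by
            push_cast
            exact hstrict
          exact_mod_cast this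
        have hle : (∑ i ∈ S, ⌊y i⌋ : ℤ) ≤ (lam:ℤ) := by omega
        have : ((∑ i ∈ S, ⌊y i⌋ : ℤ) : ℝ) ≤ ((lam:ℤ):ℝ) := by exact_mod_cast hle
        push_cast at this
        convert this using 2
      · push_neg at hne
        have hz : ∀ i ∈ S, (⌊y i⌋:ℝ) = 0 := by
          intro i hi
          simp [hy, hne i hi]
        rw [Finset.sum_congr rfl hz]
        simp
  have heq : ∀ i ∈ S,
      (if x i = 0 then (0 : ℝ)
      else if ∃ m : ℤ, m ≠ 0 ∧ ((lam : ℝ) + 1) * x i = m then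
        (((lam : ℝ) + 1) * x i - 1) / lam
      else (⌊((lam : ℝ) + 1) * x i⌋ : ℝ) / lam) = h i / lam := by
    intro i hi
    simp only [hh, hy]
    split_ifs
    · simp
    · rfl
    · rfl
  rw [Finset.sum_congr rfl heq, ← Finset.sum_div, div_le_one hl]
  exact key
end

section
/- For every positive integer λ and every real x ∈ [0,1], one has g^λ(x) ≤ f_{FS,1}^λ(x), where g^λ(0) = 0, g^λ(x) = ((λ+1)x − 1)/λ if (λ+1)x is a nonzero integer, g^λ(x) = ⌊(λ+1)x⌋/λ otherwise; and f_{FS,1}^λ(x) = x if (λ+1)x is an integer, f_{FS,1}^λ(x) = ⌊(λ+1)x⌋/λ otherwise. In particular g^λ is a non-maximal dual-feasible function dominated pointwise by the Fekete–Schepers function f_{FS,1}^λ. -/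
open scoped Classical

/-- Pointwise domination of `g^λ` by the Fekete–Schepers function `f_{FS,1}^λ`. -/
theorem g_lambda_le_fekete_schepers (lam : ℕ) (hlam : 0 < lam)
    (x : ℝ) (hx0 : 0 ≤ x) (hx1 : x ≤ 1) :
    (if x = 0 then (0 : ℝ)
      else if ∃ m : ℤ, m ≠ 0 ∧ ((lam : ℝ) + 1) * x = m then
        (((lam : ℝ) + 1) * x - 1) / lam
      else (⌊((lam : ℝ) + 1) * x⌋ : ℝ) / lam)
    ≤ (if ∃ m : ℤ, ((lam : ℝ) + 1) * x = m then x
      else (⌊((lam : ℝ) + 1) * x⌋ : ℝ) / lam) := by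
  have hl : (0 : ℝ) < lam := by exact_mod_cast hlam
  by_cases h0 : x = 0
  · subst h0
    simp
  · rw [if_neg h0]
    by_cases h1 : ∃ m : ℤ, m ≠ 0 ∧ ((lam : ℝ) + 1) * x = m
    · rw [if_pos h1, if_pos ⟨h1.choose, h1.choose_spec.2⟩]
      rw [div_le_iff₀ hl]
      nlinarith
    · rw [if_neg h1]
      have h2 : ¬ ∃ m : ℤ, ((lam : ℝ) + 1) * x = m := by
        rintro ⟨m, hm⟩
        rcases eq_or_ne m 0 with rfl | hne
        · apply h0
          have hne' : ((lam : ℝ) + 1) ≠ 0 := by positivity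
          have hz : ((lam : ℝ) + 1) * x = 0 := by simpa using hm
          rcases mul_eq_zero.mp hz with h | h
          · exact absurd h hne'
          · exact h
        · exact h1 ⟨m, hne, hm⟩
      rw [if_neg h2]
end

section
/- Fix a real number d̄ > 0 and an integer q with 2 ≤ q ≤ d̄. Let K be a finite set of routes, where each route k ∈ K has a duration t_k ≥ 0 and a deadline d̄_k, let P be a finite set of pickers, and let ρ : K × P → {0,1} satisfy, for every picker p ∈ P, Σ_{k ∈ K(d̄)} t_k ρ_{kp} ≤ d̄, where K(d̄) = {k ∈ K : d̄_k ≤ d̄}. For each integer i with 1 ≤ i ≤ q−1, define K(d̄,i,q) = {k ∈ K(d̄) : i·d̄/q < t_k ≤ (i+1)·d̄/q}. Then the Fekete and Schepers cut holds: Σ_{i=1}^{q−1} Σ_{k ∈ K(d̄,i,q)} i · (Σ_{p∈P} ρ_{kp}) ≤ (q−1) · |P|. -/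
/-!
Fix a picker and write `n` for its contribution to the left-hand side; since `ρ` is
`0`/`1`-valued, `n` is a natural number. A route in the `i`-th size class of width
`w = d̄ / q` has duration greater than `i · w`, and the size classes are disjoint, so
if `n ≠ 0` then `n · w` is strictly less than the total duration of the picker's
routes in `K(d̄)`, which is at most `d̄ = q · w`. Hence `n < q`, i.e. `n ≤ q - 1`;
summing over the pickers gives the cut.
-/

open Finset Function

section SizeClass

variable {κ : Type*}

/-- The paper's `K(d̄, i, q)` is `sizeClass K(d̄) t (d̄ / q) i`. -/
noncomputable def sizeClass (K : Finset κ) (t : κ → ℝ) (w : ℝ) (i : ℕ) : Finset κ :=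
  K.filter fun k => (i : ℝ) * w < t k ∧ t k ≤ ((i : ℝ) + 1) * w

variable {K : Finset κ} {t : κ → ℝ} {w : ℝ}

theorem sizeClass_subset (i : ℕ) : sizeClass K t w i ⊆ K :=
  filter_subset _ _

theorem mul_lt_of_mem_sizeClass {i : ℕ} {k : κ} (hk : k ∈ sizeClass K t w i) :
    (i : ℝ) * w < t k :=
  (mem_filter.mp hk).2.1

theorem pairwise_disjoint_sizeClass (hw : 0 ≤ w) :
    Pairwise (Disjoint on sizeClass K t w) := by
  refine (pairwise_disjoint_on (sizeClass K t w)).mpr fun i j hij =>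
    disjoint_left.mpr fun k hki hkj => ?_
  have hupper : t k ≤ ((i : ℝ) + 1) * w := (mem_filter.mp hki).2.2
  have hij' : (i : ℝ) + 1 ≤ j := by exact_mod_cast hij
  have := mul_lt_of_mem_sizeClass hkj
  nlinarith

variable {a : κ → ℝ}

theorem exists_natCast_eq_sum_sizeClass_mul (ha : ∀ k ∈ K, a k = 0 ∨ a k = 1) (I : Finset ℕ) :
    ∃ n : ℕ, (n : ℝ) = ∑ i ∈ I, ∑ k ∈ sizeClass K t w i, (i : ℝ) * a k := by
  refine (AddMonoidHom.mem_mrange (f := Nat.castAddMonoidHom ℝ)).mp <|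
    sum_mem fun i _ => sum_mem fun k hk => ?_
  rcases ha k (sizeClass_subset i hk) with h | h
  · exact ⟨0, by simp [h]⟩
  · exact ⟨i, by simp [h]⟩

theorem mul_mul_le_of_mem_sizeClass (ha : ∀ k ∈ K, a k = 0 ∨ a k = 1) {i : ℕ} {k : κ}
    (hk : k ∈ sizeClass K t w i) : w * ((i : ℝ) * a k) ≤ t k * a k ∧
      ((i : ℝ) * a k ≠ 0 → w * ((i : ℝ) * a k) < t k * a k) := by
  have hlt : w * i < t k := mul_comm w i ▸ mul_lt_of_mem_sizeClass hk
  rcases ha k (sizeClass_subset i hk) with h | h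
  · simp [h]
  · simp only [h, mul_one]
    exact ⟨hlt.le, fun _ => hlt⟩

theorem mul_sum_sizeClass_mul_lt (ht : ∀ k ∈ K, 0 ≤ t k) (hw : 0 ≤ w)
    (ha : ∀ k ∈ K, a k = 0 ∨ a k = 1) (I : Finset ℕ)
    (hne : ∑ i ∈ I, ∑ k ∈ sizeClass K t w i, (i : ℝ) * a k ≠ 0) :
    w * ∑ i ∈ I, ∑ k ∈ sizeClass K t w i, (i : ℝ) * a k < ∑ k ∈ K, t k * a k := by
  classical
  obtain ⟨i₀, hi₀, hne'⟩ := exists_ne_zero_of_sum_ne_zero hne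
  obtain ⟨k₀, hk₀, hne''⟩ := exists_ne_zero_of_sum_ne_zero hne'
  have hbins : ∑ i ∈ I, ∑ k ∈ sizeClass K t w i, t k * a k
      = ∑ k ∈ I.biUnion (sizeClass K t w), t k * a k :=
    (sum_biUnion ((pairwise_disjoint_sizeClass hw).set_pairwise _)).symm
  have hsub : I.biUnion (sizeClass K t w) ⊆ K := biUnion_subset.mpr fun i _ => sizeClass_subset i
  calc w * ∑ i ∈ I, ∑ k ∈ sizeClass K t w i, (i : ℝ) * a k
      = ∑ i ∈ I, ∑ k ∈ sizeClass K t w i, w * ((i : ℝ) * a k) := by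
        simp only [mul_sum]
    _ < ∑ i ∈ I, ∑ k ∈ sizeClass K t w i, t k * a k :=
        sum_lt_sum (fun i _ => sum_le_sum fun k hk => (mul_mul_le_of_mem_sizeClass ha hk).1)
          ⟨i₀, hi₀, sum_lt_sum (fun k hk => (mul_mul_le_of_mem_sizeClass ha hk).1)
            ⟨k₀, hk₀, (mul_mul_le_of_mem_sizeClass ha hk₀).2 hne''⟩⟩
    _ = ∑ k ∈ I.biUnion (sizeClass K t w), t k * a k := hbins
    _ ≤ ∑ k ∈ K, t k * a k := by
        refine sum_le_sum_of_subset_of_nonneg hsub fun k hk _ => ?_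
        rcases ha k hk with h | h <;> simp [h, ht k hk]

theorem sum_sizeClass_mul_le (ht : ∀ k ∈ K, 0 ≤ t k) (hw : 0 < w)
    (ha : ∀ k ∈ K, a k = 0 ∨ a k = 1) {q : ℕ} (hq : 1 ≤ q)
    (hcap : ∑ k ∈ K, t k * a k ≤ q * w) (I : Finset ℕ) :
    ∑ i ∈ I, ∑ k ∈ sizeClass K t w i, (i : ℝ) * a k ≤ (q : ℝ) - 1 := by
  obtain ⟨n, hn⟩ := exists_natCast_eq_sum_sizeClass_mul (t := t) (w := w) ha I
  rw [← hn]
  have hnq : n < q := by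
    rcases eq_or_ne n 0 with rfl | hn0
    · exact hq
    · have hlt := mul_sum_sizeClass_mul_lt ht hw.le ha I (by rw [← hn]; exact_mod_cast hn0)
      rw [← hn] at hlt
      have : (n : ℝ) < q := lt_of_mul_lt_mul_right (by linarith) hw.le
      exact_mod_cast this
  have : (n : ℝ) + 1 ≤ q := by exact_mod_cast hnq
  linarith

end SizeClass

theorem fekete_schepers_cut_general {κ π : Type*} (K : Finset κ) (P : Finset π)
    (t d : κ → ℝ) (ht : ∀ k ∈ K, 0 ≤ t k)
    (dbar : ℝ) (hdbar : 0 < dbar) (q : ℕ) (hq1 : 2 ≤ q)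
    (ρ : κ → π → ℝ) (hbin : ∀ k ∈ K, ∀ p ∈ P, ρ k p = 0 ∨ ρ k p = 1)
    (hdl : ∀ p ∈ P, ∑ k ∈ K.filter (fun k => d k ≤ dbar), t k * ρ k p ≤ dbar) :
    ∑ i ∈ Finset.Icc 1 (q - 1),
      ∑ k ∈ K.filter (fun k => d k ≤ dbar ∧
          (i : ℝ) * dbar / q < t k ∧ t k ≤ ((i : ℝ) + 1) * dbar / q),
        (i : ℝ) * (∑ p ∈ P, ρ k p)
      ≤ ((q : ℝ) - 1) * P.card := by
  set Kd := K.filter fun k => d k ≤ dbar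
  have hq : (0 : ℝ) < q := by positivity
  have hclass (i : ℕ) : K.filter (fun k => d k ≤ dbar ∧
      (i : ℝ) * dbar / q < t k ∧ t k ≤ ((i : ℝ) + 1) * dbar / q) = sizeClass Kd t (dbar / q) i := by
    simp only [sizeClass, Kd, filter_filter, mul_div_assoc]
  calc _ = ∑ p ∈ P, ∑ i ∈ Icc 1 (q - 1), ∑ k ∈ sizeClass Kd t (dbar / q) i, (i : ℝ) * ρ k p := by
        simp only [hclass, mul_sum]
        rw [sum_comm]
        exact sum_congr rfl fun i _ => sum_comm
    _ ≤ ∑ _p ∈ P, ((q : ℝ) - 1) := by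
        refine sum_le_sum fun p hp => sum_sizeClass_mul_le (fun k hk => ht k (filter_subset _ _ hk))
          (div_pos hdbar hq) (fun k hk => hbin k (filter_subset _ _ hk) p hp) (by omega) ?_ _
        rw [mul_div_cancel₀ _ hq.ne']
        exact hdl p hp
    _ = ((q : ℝ) - 1) * P.card := by rw [sum_const, nsmul_eq_mul, mul_comm]

/-- The Fekete and Schepers cut is valid for any assignment satisfying the per-picker
deadline constraints. -/
theorem fekete_schepers_cut {κ π : Type*} (K : Finset κ) (P : Finset π)
    (t d : κ → ℝ) (ht : ∀ k ∈ K, 0 ≤ t k)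
    (dbar : ℝ) (hdbar : 0 < dbar) (q : ℕ) (hq1 : 2 ≤ q) (hq2 : (q : ℝ) ≤ dbar)
    (ρ : κ → π → ℝ) (hbin : ∀ k ∈ K, ∀ p ∈ P, ρ k p = 0 ∨ ρ k p = 1)
    (hdl : ∀ p ∈ P, ∑ k ∈ K.filter (fun k => d k ≤ dbar), t k * ρ k p ≤ dbar) :
    ∑ i ∈ Finset.Icc 1 (q - 1),
      ∑ k ∈ K.filter (fun k => d k ≤ dbar ∧
          (i : ℝ) * dbar / q < t k ∧ t k ≤ ((i : ℝ) + 1) * dbar / q),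
        (i : ℝ) * (∑ p ∈ P, ρ k p)
      ≤ ((q : ℝ) - 1) * P.card :=
  fekete_schepers_cut_general K P t d ht dbar hdbar q hq1 ρ hbin hdl
end

section
/- Consider a finite set O of orders, a finite set D of deadline values, a finite nonempty set P of pickers, and a finite set K of routes, where each route k ∈ K has a duration t_k ≥ 0, a set of collected orders O_k ⊆ O and a deadline d̄_k; write K(o) = {k ∈ K : o ∈ O_k} and K(d̄) = {k ∈ K : d̄_k ≤ d̄}. Let F_LB be the set of functions ρ : K × P → ℝ with ρ ≥ 0, Σ_{k∈K(o)} Σ_{p∈P} ρ_{kp} ≥ 1 for every o ∈ O, and Σ_{k∈K(d̄)} t_k ρ_{kp} ≤ d̄ for every d̄ ∈ D and p ∈ P; and let F_LM be the set of functions ρ : K → ℝ with ρ ≥ 0, Σ_{k∈K(o)} ρ_k ≥ 1 for every o ∈ O, and Σ_{k∈K(d̄)} t_k ρ_k ≤ d̄ · |P| for every d̄ ∈ D. Then the sets of attained objective values coincide: {Σ_{k∈K} t_k Σ_{p∈P} ρ_{kp} : ρ ∈ F_LB} = {Σ_{k∈K} t_k ρ_k : ρ ∈ F_LM}. Specifically,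 for ρ ∈ F_LB the aggregation k ↦ Σ_{p∈P} ρ_{kp} lies in F_LM with the same objective value, and for ρ ∈ F_LM the disaggregation (k,p) ↦ ρ_k/|P| lies in F_LB with the same objective value. In particular, the linear relaxations of formulations B(K) and M(K) have equal optimal values. -/
/-- The linear relaxations of formulations `B(K)` and `M(K)` attain the same objective
values: aggregation maps a feasible `ρ_{kp}` to a feasible `ρ_k` with the same objective,
disaggregation maps a feasible `ρ_k` to a feasible `ρ_{kp}` with the same objective, and
the sets of attained objective values coincide. -/
theorem LB_LM_equal_values {α κ π : Type*} [DecidableEq α] (O : Finset α) (D : Finset ℝ)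
    (P : Finset π) (hP : P.Nonempty)
    (K : Finset κ) (t : κ → ℝ) (ht : ∀ k ∈ K, 0 ≤ t k)
    (Ord : κ → Finset α) (hOrd : ∀ k ∈ K, Ord k ⊆ O) (dl : κ → ℝ) :
    (∀ ρ : κ → π → ℝ,
      (∀ k ∈ K, ∀ p ∈ P, 0 ≤ ρ k p) →
      (∀ o ∈ O, 1 ≤ ∑ k ∈ K.filter (fun k => o ∈ Ord k), ∑ p ∈ P, ρ k p) →
      (∀ d ∈ D, ∀ p ∈ P, ∑ k ∈ K.filter (fun k => dl k ≤ d), t k * ρ k p ≤ d) →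
        ((∀ k ∈ K, 0 ≤ ∑ p ∈ P, ρ k p) ∧
         (∀ o ∈ O, 1 ≤ ∑ k ∈ K.filter (fun k => o ∈ Ord k), ∑ p ∈ P, ρ k p) ∧
         (∀ d ∈ D, ∑ k ∈ K.filter (fun k => dl k ≤ d), t k * (∑ p ∈ P, ρ k p)
            ≤ d * P.card) ∧
         ∑ k ∈ K, t k * (∑ p ∈ P, ρ k p) = ∑ k ∈ K, t k * ∑ p ∈ P, ρ k p)) ∧
    (∀ ρ : κ → ℝ,
      (∀ k ∈ K, 0 ≤ ρ k) →
      (∀ o ∈ O, 1 ≤ ∑ k ∈ K.filter (fun k => o ∈ Ord k), ρ k) →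
      (∀ d ∈ D, ∑ k ∈ K.filter (fun k => dl k ≤ d), t k * ρ k ≤ d * P.card) →
        ((∀ k ∈ K, ∀ p ∈ P, 0 ≤ ρ k / P.card) ∧
         (∀ o ∈ O, 1 ≤ ∑ k ∈ K.filter (fun k => o ∈ Ord k), ∑ _p ∈ P, ρ k / P.card) ∧
         (∀ d ∈ D, ∀ p ∈ P, ∑ k ∈ K.filter (fun k => dl k ≤ d), t k * (ρ k / P.card) ≤ d) ∧
         ∑ k ∈ K, t k * (∑ _p ∈ P, ρ k / P.card) = ∑ k ∈ K, t k * ρ k)) ∧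
    ({v : ℝ | ∃ ρ : κ → π → ℝ,
        (∀ k ∈ K, ∀ p ∈ P, 0 ≤ ρ k p) ∧
        (∀ o ∈ O, 1 ≤ ∑ k ∈ K.filter (fun k => o ∈ Ord k), ∑ p ∈ P, ρ k p) ∧
        (∀ d ∈ D, ∀ p ∈ P, ∑ k ∈ K.filter (fun k => dl k ≤ d), t k * ρ k p ≤ d) ∧
        v = ∑ k ∈ K, t k * ∑ p ∈ P, ρ k p} =
     {v : ℝ | ∃ ρ : κ → ℝ,
        (∀ k ∈ K, 0 ≤ ρ k) ∧
        (∀ o ∈ O, 1 ≤ ∑ k ∈ K.filter (fun k => o ∈ Ord k), ρ k) ∧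
        (∀ d ∈ D, ∑ k ∈ K.filter (fun k => dl k ≤ d), t k * ρ k ≤ d * P.card) ∧
        v = ∑ k ∈ K, t k * ρ k}) := by

  have hc : (0:ℝ) < P.card := by exact_mod_cast (Finset.card_pos.mpr hP)
  have sumconst : ∀ ρ : κ → ℝ, ∀ k, (∑ _p ∈ P, ρ k / P.card) = ρ k := by
    intro ρ k
    rw [Finset.sum_const, nsmul_eq_mul]
    field_simp
  have agg : ∀ ρ : κ → π → ℝ,
      (∀ d ∈ D, ∀ p ∈ P, ∑ k ∈ K.filter (fun k => dl k ≤ d), t k * ρ k p ≤ d) →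
      (∀ d ∈ D, ∑ k ∈ K.filter (fun k => dl k ≤ d), t k * (∑ p ∈ P, ρ k p)
            ≤ d * P.card) := by
    intro ρ h3 d hd
    have : ∑ k ∈ K.filter (fun k => dl k ≤ d), t k * (∑ p ∈ P, ρ k p)
        = ∑ p ∈ P, ∑ k ∈ K.filter (fun k => dl k ≤ d), t k * ρ k p := by
      rw [Finset.sum_comm]
      exact Finset.sum_congr rfl fun k _ => Finset.mul_sum _ _ _
    rw [this]
    calc ∑ p ∈ P, ∑ k ∈ K.filter (fun k => dl k ≤ d), t k * ρ k p
        ≤ ∑ _p ∈ P, d := Finset.sum_le_sum (fun p hp => h3 d hd p hp)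
      _ = d * P.card := by rw [Finset.sum_const, nsmul_eq_mul]; ring
  have disagg : ∀ ρ : κ → ℝ,
      (∀ k ∈ K, 0 ≤ ρ k) →
      (∀ o ∈ O, 1 ≤ ∑ k ∈ K.filter (fun k => o ∈ Ord k), ρ k) →
      (∀ d ∈ D, ∑ k ∈ K.filter (fun k => dl k ≤ d), t k * ρ k ≤ d * P.card) →
        ((∀ k ∈ K, ∀ p ∈ P, 0 ≤ ρ k / P.card) ∧
         (∀ o ∈ O, 1 ≤ ∑ k ∈ K.filter (fun k => o ∈ Ord k), ∑ _p ∈ P, ρ k / P.card) ∧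
         (∀ d ∈ D, ∀ p ∈ P, ∑ k ∈ K.filter (fun k => dl k ≤ d), t k * (ρ k / P.card) ≤ d) ∧
         ∑ k ∈ K, t k * (∑ _p ∈ P, ρ k / P.card) = ∑ k ∈ K, t k * ρ k) := by
    intro ρ h1 h2 h3
    refine ⟨fun k hk p _ => div_nonneg (h1 k hk) hc.le, ?_, ?_, ?_⟩
    · intro o ho
      calc (1:ℝ) ≤ ∑ k ∈ K.filter (fun k => o ∈ Ord k), ρ k := h2 o ho
        _ = _ := by exact Finset.sum_congr rfl fun k _ => (sumconst ρ k).symm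
    · intro d hd p hp
      have : ∑ k ∈ K.filter (fun k => dl k ≤ d), t k * (ρ k / P.card)
          = (∑ k ∈ K.filter (fun k => dl k ≤ d), t k * ρ k) / P.card := by
        rw [Finset.sum_div]
        exact Finset.sum_congr rfl fun k _ => by ring
      rw [this, div_le_iff₀ hc]
      exact h3 d hd
    · exact Finset.sum_congr rfl fun k _ => by rw [sumconst ρ k]
  refine ⟨fun ρ h1 h2 h3 => ⟨fun k hk => Finset.sum_nonneg fun p hp => h1 k hk p hp,
    h2, agg ρ h3, rfl⟩, disagg, ?_⟩
  ext v
  constructor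
  · rintro ⟨ρ, h1, h2, h3, rfl⟩
    exact ⟨fun k => ∑ p ∈ P, ρ k p, fun k hk => Finset.sum_nonneg fun p hp => h1 k hk p hp,
      h2, agg ρ h3, rfl⟩
  · rintro ⟨ρ, h1, h2, h3, rfl⟩
    obtain ⟨c1, c2, c3, c4⟩ := disagg ρ h1 h2 h3
    exact ⟨fun k _ => ρ k / P.card, c1, c2, c3, c4.symm⟩
end

section
/- Let O be a finite set and let t assign to every subset of O a real duration, monotone under inclusion (k ⊆ k' implies t_k ≤ t_{k'}). Fix a subset k ⊆ O, a real number b ≥ 0, and nonnegative reals a_o for o ∈ k, and assume the base inequality is valid: for every subset k' ⊆ O, b + Σ_{o ∈ k∩k'} a_o ≤ t_{k'}. Let Δ_k = t_k − b − Σ_{o∈k} a_o (which is nonnegative). Then for every subset k' ⊆ O, the strengthened tour constraint holds: b + Σ_{o ∈ k∩k'} a_o + Δ_k · (|k∩k'| − |k| + 1) ≤ t_{k'}; moreover, whenever k ⊆ k' the left-hand side equals t_k, so the constraint exactly computes t_k when k' = k. -/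
/-- The strengthened tour constraint is valid and exactly computes `t_k` on supersets of
`k`. -/
theorem strengthened_tour_constraint {α : Type*} [DecidableEq α] (O : Finset α)
    (t : Finset α → ℝ)
    (hmono : ∀ k k', k ⊆ k' → k' ⊆ O → t k ≤ t k')
    (k : Finset α) (hk : k ⊆ O)
    (b : ℝ) (hb : 0 ≤ b) (a : α → ℝ) (ha : ∀ o ∈ k, 0 ≤ a o)
    (hbase : ∀ k' ⊆ O, b + ∑ o ∈ k ∩ k', a o ≤ t k') :
    (0 ≤ t k - b - ∑ o ∈ k, a o) ∧
    (∀ k' ⊆ O,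
      b + ∑ o ∈ k ∩ k', a o
        + (t k - b - ∑ o ∈ k, a o) * (((k ∩ k').card : ℝ) - (k.card : ℝ) + 1) ≤ t k') ∧
    (∀ k' ⊆ O, k ⊆ k' →
      b + ∑ o ∈ k ∩ k', a o
        + (t k - b - ∑ o ∈ k, a o) * (((k ∩ k').card : ℝ) - (k.card : ℝ) + 1) = t k) := by
  have hΔ : 0 ≤ t k - b - ∑ o ∈ k, a o := by
    have := hbase k hk
    rw [Finset.inter_self] at this
    linarith
  refine ⟨hΔ, ?_, ?_⟩
  · intro k' hk'
    by_cases h : k ⊆ k'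
    · rw [Finset.inter_eq_left.mpr h]
      have := hmono k k' h hk'
      ring_nf
      linarith
    · have hss : k ∩ k' ⊂ k := by
        refine ⟨Finset.inter_subset_left, fun hle => h ?_⟩
        exact fun x hx => (Finset.mem_inter.mp (hle hx)).2
      have hcard : (k ∩ k').card < k.card := Finset.card_lt_card hss
      have hcoef : (((k ∩ k').card : ℝ) - (k.card : ℝ) + 1) ≤ 0 := by
        have : ((k ∩ k').card : ℝ) + 1 ≤ (k.card : ℝ) := by exact_mod_cast hcard
        linarith
      have hmul : (t k - b - ∑ o ∈ k, a o) * (((k ∩ k').card : ℝ) - (k.card : ℝ) + 1) ≤ 0 :=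
        mul_nonpos_of_nonneg_of_nonpos hΔ hcoef
      have := hbase k' hk'
      linarith
  · intro k' hk' h
    rw [Finset.inter_eq_left.mpr h]
    ring
end

section
/- Let k and k' be finite sets of orders with k ∩ k' a proper subset of k, let t_k ≥ 0 be a real number (the duration of route k), let b ≥ 0 and a_o ≥ 0 for all orders o, and let Δ_k be a real number with 0 ≤ Δ_k ≤ t_k. Then b + Σ_{o∈k'} a_o + Δ_k · (|k∩k'| − |k| + 1) ≥ t_k · (|k∩k'| − |k| + 1); that is, the left-hand side of the strengthened tour constraint is at least the left-hand side of the original tour constraint, so the strengthened tour constraint provides a better (larger) lower estimate of the route duration in the pricing problem. -/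
/-- The left-hand side of the strengthened tour constraint dominates the left-hand side of
the original tour constraint when `k ∩ k'` is a proper subset of `k`. -/
theorem strengthened_dominates_original {α : Type*} [DecidableEq α] (k k' : Finset α)
    (hss : k ∩ k' ⊂ k)
    (tk : ℝ) (htk : 0 ≤ tk)
    (b : ℝ) (hb : 0 ≤ b) (a : α → ℝ) (ha : ∀ o, 0 ≤ a o)
    (Δ : ℝ) (hΔ0 : 0 ≤ Δ) (hΔt : Δ ≤ tk) :
    tk * (((k ∩ k').card : ℝ) - (k.card : ℝ) + 1)
      ≤ b + ∑ o ∈ k', a o + Δ * (((k ∩ k').card : ℝ) - (k.card : ℝ) + 1) := by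
  have hcard : (k ∩ k').card < k.card := Finset.card_lt_card hss
  have hc : (((k ∩ k').card : ℝ) - (k.card : ℝ) + 1) ≤ 0 := by
    have : ((k ∩ k').card : ℝ) + 1 ≤ (k.card : ℝ) := by exact_mod_cast hcard
    linarith
  have h1 : tk * (((k ∩ k').card : ℝ) - (k.card : ℝ) + 1)
      ≤ Δ * (((k ∩ k').card : ℝ) - (k.card : ℝ) + 1) :=
    mul_le_mul_of_nonpos_right hΔt hc
  have h2 : 0 ≤ ∑ o ∈ k', a o := Finset.sum_nonneg fun o _ => ha o
  linarith
end

section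
/- Let O be a finite set and let t assign to every subset of O a real duration. Fix a subset k ⊆ O, a real number b ≥ 0, and nonnegative reals a_o for all o ∈ O, and assume: (14) for every subset k' ⊆ O, b + Σ_{o∈k'} a_o ≤ t_{k'}; and (15) for every subset k' ⊆ O with k ⊆ k', t_k + Σ_{o∈k'∖k} a_o ≤ t_{k'}. Let Δ_k = t_k − b − Σ_{o∈k} a_o (which is nonnegative by (14) applied to k' = k). Then for every subset k' ⊆ O, the generalized strengthened tour constraint holds: b + Σ_{o∈k'} a_o + Δ_k · (|k∩k'| − |k| + 1) ≤ t_{k'}, with equality when k' = k, so the constraint exactly computes t_k. -/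
/-- The generalized strengthened tour constraint (Proposition 6 of the paper) is valid for
all batches and exactly computes `t_k` on `k` itself. -/
theorem generalized_strengthened_tour_constraint {α : Type*} [DecidableEq α]
    (O : Finset α) (t : Finset α → ℝ) (k : Finset α) (hk : k ⊆ O)
    (b : ℝ) (hb : 0 ≤ b) (a : α → ℝ) (ha : ∀ o ∈ O, 0 ≤ a o)
    (hbase : ∀ k' ⊆ O, b + ∑ o ∈ k', a o ≤ t k')
    (hsuper : ∀ k' ⊆ O, k ⊆ k' → t k + ∑ o ∈ k' \ k, a o ≤ t k') :
    (0 ≤ t k - b - ∑ o ∈ k, a o) ∧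
    (∀ k' ⊆ O,
      b + ∑ o ∈ k', a o
        + (t k - b - ∑ o ∈ k, a o) * (((k ∩ k').card : ℝ) - (k.card : ℝ) + 1) ≤ t k') ∧
    (b + ∑ o ∈ k, a o
        + (t k - b - ∑ o ∈ k, a o) * (((k ∩ k).card : ℝ) - (k.card : ℝ) + 1) = t k) := by
  have hΔ : 0 ≤ t k - b - ∑ o ∈ k, a o := by
    have := hbase k hk
    linarith
  refine ⟨hΔ, ?_, ?_⟩
  · intro k' hk'
    by_cases hsub : k ⊆ k'
    · have hint : k ∩ k' = k := Finset.inter_eq_left.mpr hsub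
      have hsum : ∑ o ∈ k' \ k, a o + ∑ o ∈ k, a o = ∑ o ∈ k', a o :=
        Finset.sum_sdiff hsub
      have h := hsuper k' hk' hsub
      rw [hint]
      ring_nf
      nlinarith [h, hsum]
    · have hlt : (k ∩ k').card < k.card := by
        refine Finset.card_lt_card ?_
        refine ⟨Finset.inter_subset_left, ?_⟩
        intro h
        exact hsub fun x hx => (Finset.mem_inter.mp (h hx)).2
      have hcoef : ((k ∩ k').card : ℝ) - (k.card : ℝ) + 1 ≤ 0 := by
        have : ((k ∩ k').card : ℝ) + 1 ≤ (k.card : ℝ) := by exact_mod_cast hlt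
        linarith
      have := hbase k' hk'
      nlinarith
  · rw [Finset.inter_self]
    ring_nf
end
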